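/- arXiv:2511.11413 — 6 statements merged into one kernel-verified Lean document; each statement's English description precedes it below -/
import Mathlib

section
/- Let X be a finite type (contexts) with a probability mass function μ, E a finite type (edges) of cardinality m, and y : X → E → [0,1] the true edge weights. Let C be a finite set of decision rules, where each c ∈ C maps a weight vector in [0,1]^E to a matching (a set of edges); let c⋆ be a rule such that for every weight vector w, c⋆(w) maximizes ∑_{e ∈ M} w e over all matchings M. Let γ, γ̂ : X → E → [0,1] be predictors and α ≥ 0. Suppose: (a) for every c ∈ C, |E_{x∼μ}[ ∑_{e ∈ c(γ(x))} (y x e − γ̂ x e) ]| ≤ α·m, and (b) |E_{x∼μ}[ ∑_{e ∈ c⋆(γ̂(x))} (y x e − γ̂ x e) ]| ≤ α·m. Then for every c ∈ C: E_{x∼μ}[ ∑_{e ∈ c(γ(x))} y x e ] ≤ 2·α·m + E_{x∼μ}[ ∑_{e ∈ c⋆(γ̂(x))} y x e ]. -/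
/-! Calibration on the decisions of `c` lets us replace the true weights `y` by `γhat` at a cost
of `α m`; on `γhat` the rule `c⋆` is optimal pointwise, so it beats `c`; calibration on the
decisions of `c⋆` then brings us back to `y` at another cost of `α m`. -/

section ExpectedWeight

variable {X E : Type*} [Fintype X]

def expectedWeight (μ : X → ℝ) (S : X → Finset E) (w : X → E → ℝ) : ℝ :=
  ∑ x, μ x * ∑ e ∈ S x, w x e

theorem expectedWeight_sub (μ : X → ℝ) (S : X → Finset E) (f g : X → E → ℝ) :
    expectedWeight μ S (fun x e => f x e - g x e) =
      expectedWeight μ S f - expectedWeight μ S g := by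
  simp only [expectedWeight, Finset.sum_sub_distrib, mul_sub]

theorem expectedWeight_le_expectedWeight {μ : X → ℝ} (hμ : ∀ x, 0 ≤ μ x)
    {S T : X → Finset E} {w w' : X → E → ℝ}
    (h : ∀ x, ∑ e ∈ S x, w x e ≤ ∑ e ∈ T x, w' x e) :
    expectedWeight μ S w ≤ expectedWeight μ T w' :=
  Finset.sum_le_sum fun x _ => mul_le_mul_of_nonneg_left (h x) (hμ x)

end ExpectedWeight

theorem multicalibration_matching_general
    {X E : Type*} [Fintype X] [Fintype E]
    (μ : X → ℝ) (hμ0 : ∀ x, 0 ≤ μ x)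
    (y : X → E → ℝ)
    (isMatching : Finset E → Prop)
    (C : Finset ((E → ℝ) → Finset E))
    (hC : ∀ c ∈ C, ∀ w : E → ℝ, isMatching (c w))
    (cstar : (E → ℝ) → Finset E)
    (hcstarOpt : ∀ (w : E → ℝ) (M : Finset E), isMatching M →
      ∑ e ∈ M, w e ≤ ∑ e ∈ cstar w, w e)
    (γ γhat : X → E → ℝ)
    (α : ℝ)
    (ha : ∀ c ∈ C,
      |∑ x, μ x * ∑ e ∈ c (γ x), (y x e - γhat x e)| ≤ α * (Fintype.card E))
    (hb : |∑ x, μ x * ∑ e ∈ cstar (γhat x), (y x e - γhat x e)| ≤ α * (Fintype.card E)) :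
    ∀ c ∈ C,
      ∑ x, μ x * ∑ e ∈ c (γ x), y x e ≤
        2 * α * (Fintype.card E) + ∑ x, μ x * ∑ e ∈ cstar (γhat x), y x e := by
  intro c hc
  set S : X → Finset E := fun x => c (γ x)
  set Sstar : X → Finset E := fun x => cstar (γhat x)
  have hcal : |expectedWeight μ S y - expectedWeight μ S γhat| ≤ α * Fintype.card E := by
    rw [← expectedWeight_sub]; exact ha c hc
  have hcalStar :
      |expectedWeight μ Sstar y - expectedWeight μ Sstar γhat| ≤ α * Fintype.card E := by
    rw [← expectedWeight_sub]; exact hb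
  have hopt : expectedWeight μ S γhat ≤ expectedWeight μ Sstar γhat :=
    expectedWeight_le_expectedWeight hμ0 fun x => hcstarOpt _ _ (hC c hc _)
  show expectedWeight μ S y ≤ 2 * α * Fintype.card E + expectedWeight μ Sstar y
  linarith [(abs_le.mp hcal).2, (abs_le.mp hcalStar).1]

/-- Theorem 3.1: multicalibration of γ̂ w.r.t. the family induced by C, γ and c⋆, γ̂
implies that the optimal rule c⋆ on γ̂ is competitive with any rule c ∈ C on γ,
up to additive error 2·α·m. -/
theorem multicalibration_matching
    {X E : Type*} [Fintype X] [Fintype E]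
    (μ : X → ℝ) (hμ0 : ∀ x, 0 ≤ μ x) (hμ1 : ∑ x, μ x = 1)
    (y : X → E → ℝ) (hy : ∀ x e, y x e ∈ Set.Icc (0:ℝ) 1)
    (isMatching : Finset E → Prop)
    (C : Finset ((E → ℝ) → Finset E))
    (hC : ∀ c ∈ C, ∀ w : E → ℝ, isMatching (c w))
    (cstar : (E → ℝ) → Finset E)
    (hcstarM : ∀ w : E → ℝ, isMatching (cstar w))
    (hcstarOpt : ∀ (w : E → ℝ) (M : Finset E), isMatching M →
      ∑ e ∈ M, w e ≤ ∑ e ∈ cstar w, w e)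
    (γ γhat : X → E → ℝ)
    (hγ : ∀ x e, γ x e ∈ Set.Icc (0:ℝ) 1)
    (hγhat : ∀ x e, γhat x e ∈ Set.Icc (0:ℝ) 1)
    (α : ℝ) (hα : 0 ≤ α)
    (ha : ∀ c ∈ C,
      |∑ x, μ x * ∑ e ∈ c (γ x), (y x e - γhat x e)| ≤ α * (Fintype.card E))
    (hb : |∑ x, μ x * ∑ e ∈ cstar (γhat x), (y x e - γhat x e)| ≤ α * (Fintype.card E)) :
    ∀ c ∈ C,
      ∑ x, μ x * ∑ e ∈ c (γ x), y x e ≤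
        2 * α * (Fintype.card E) + ∑ x, μ x * ∑ e ∈ cstar (γhat x), y x e :=
  multicalibration_matching_general μ hμ0 y isMatching C hC cstar hcstarOpt γ γhat α ha hb
end

section
/- There exist a probability distribution D on contexts X = [0,1] (uniform), two deterministic actions with values v₁ = 1 and v₂ = 1/ε for ε ∈ (0,1), and a predictor γ : [0,1] → ℝ² with γ₁(x) = 1 for all x, γ₂(x) = 1/ε² if x ≤ ε and γ₂(x) = 0 otherwise, such that: (i) γ is unbiased, i.e., E_x[γ_i(x)] = v_i for i = 1,2; (ii) the probability that γ₂(x) > γ₁(x) (i.e., the argmax rule selects the better action 2) equals ε; (iii) the expected value obtained by the argmax rule applied to γ is 1·(1−ε) + (1/ε)·ε = 2 − ε, whereas the constant rule 'always pick action 2' obtains value 1/ε, which exceeds 2 − ε for all ε < 1. -/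
/-!
Since `1 / ε ^ 2 > 1`, the argmax rule picks action 2 exactly on `[0, ε]`, so both `γ₂` and the
payoff of the argmax rule are step functions on `[0, 1]` jumping at `ε`. All integrals in the
statement are therefore instances of one formula for the integral of such a step function.
-/

open MeasureTheory

theorem Set.Icc_inter_Iic_of_le {α : Type*} [LinearOrder α] {a b c : α} (hcb : c ≤ b) :
    Icc a b ∩ Iic c = Icc a c := by
  ext x; simp only [mem_inter_iff, mem_Icc, mem_Iic]; grind

open Set in
theorem setIntegral_Icc_ite_le {E : Type*} [NormedAddCommGroup E] [NormedSpace ℝ E]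
    [CompleteSpace E] {a b c : ℝ} (hac : a ≤ c) (hcb : c ≤ b) (p q : E) :
    ∫ x in Icc a b, (if x ≤ c then p else q) = (c - a) • p + (b - c) • q := by
  have hle : Iic c ∩ Icc a b = Icc a c := by rw [inter_comm, Icc_inter_Iic_of_le hcb]
  have hgt : Ioi c ∩ Icc a b = Ioc c b := by
    ext x; simp only [mem_inter_iff, mem_Ioi, mem_Icc, mem_Ioc]; grind
  have hpiece :
      (fun x ↦ if x ≤ c then p else q) = (Iic c).piecewise (fun _ ↦ p) (fun _ ↦ q) := by
    ext x; simp [piecewise]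
  rw [hpiece, integral_piecewise measurableSet_Iic (integrableOn_const (by simp [hle]))
    (integrableOn_const (by simp [hgt])), Measure.restrict_restrict measurableSet_Iic,
    Measure.restrict_restrict measurableSet_Iic.compl, compl_Iic, hle, hgt, setIntegral_const,
    setIntegral_const, Real.volume_real_Icc_of_le hac, Real.volume_real_Ioc_of_le hcb]

theorem two_sub_lt_one_div {ε : ℝ} (hε0 : 0 < ε) (hε1 : ε ≠ 1) : 2 - ε < 1 / ε := by
  rw [lt_div_iff₀ hε0]
  nlinarith [sq_pos_of_ne_zero (sub_ne_zero.2 hε1)]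

/-- The introductory counterexample: an unbiased predictor on which the argmax rule
is arbitrarily suboptimal compared to the constant rule "always pick action 2". -/
theorem unbiased_argmax_suboptimal
    (ε : ℝ) (hε : ε ∈ Set.Ioo (0:ℝ) 1)
    (v : Fin 2 → ℝ) (hv1 : v 0 = 1) (hv2 : v 1 = 1 / ε)
    (γ : ℝ → Fin 2 → ℝ)
    (hγ1 : ∀ x, γ x 0 = 1)
    (hγ2 : ∀ x, γ x 1 = if x ≤ ε then 1 / ε ^ 2 else 0) :
    -- (i) γ is unbiased over the uniform context distribution on [0,1]
    (∀ i : Fin 2, ∫ x in Set.Icc (0:ℝ) 1, γ x i = v i) ∧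
    -- (ii) the argmax rule picks the better action 2 with probability ε
    (volume {x | x ∈ Set.Icc (0:ℝ) 1 ∧ γ x 0 < γ x 1} = ENNReal.ofReal ε) ∧
    -- (iii) the argmax rule earns 2 - ε in expectation, dominated by the constant rule
    (∫ x in Set.Icc (0:ℝ) 1, (if γ x 0 < γ x 1 then v 1 else v 0) = 2 - ε) ∧
    (2 - ε < 1 / ε) := by
  obtain ⟨hε0, hε1⟩ := hε
  have hsplit := fun (p q : ℝ) ↦ setIntegral_Icc_ite_le (a := 0) hε0.le hε1.le p q
  have hargmax : ∀ x, γ x 0 < γ x 1 ↔ x ≤ ε := fun x ↦ by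
    have hbig : 1 < 1 / ε ^ 2 :=
      one_lt_one_div (by positivity) (pow_lt_one₀ hε0.le hε1 two_ne_zero)
    rw [hγ1, hγ2]
    split_ifs with h
    · simpa [h] using hbig
    · simp [h]
  refine ⟨?_, ?_, ?_, two_sub_lt_one_div hε0 hε1.ne⟩
  · refine Fin.forall_fin_two.2 ⟨by simp [hγ1, hv1], ?_⟩
    simp only [hγ2, hsplit, hv2, smul_eq_mul]
    field_simp
    ring
  · have hset : {x | x ∈ Set.Icc (0:ℝ) 1 ∧ γ x 0 < γ x 1} = Set.Icc 0 ε := by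
      simp only [hargmax]
      exact Set.Icc_inter_Iic_of_le hε1.le
    rw [hset, Real.volume_Icc, sub_zero]
  · simp only [hargmax, hsplit, hv1, hv2, smul_eq_mul]
    field_simp
    ring
end

section
/- Let X be a finite type with pmf μ, let g⋆ : X → ℝ^m denote the Bayes predictor (any fixed function), and let γ̂ : X → [0,1]^m be a current predictor. Suppose w : X → {0,1}^m is a weight function, b ∈ {−1, +1}, and η > 0, with b · E_{x∼μ}[⟨w(x), g⋆(x) − γ̂(x)⟩] ≥ (α/2)·m. Define γ̂' (x) = proj_{[0,1]^m}( γ̂(x) + η · b · w(x) ), the coordinatewise clamp to [0,1]. Then the potential φ(f) = E_{x∼μ}[ ‖f(x) − g⋆(x)‖₂² ] satisfies φ(γ̂) − φ(γ̂') ≥ α·m·η − η²·m, provided g⋆ takes values in [0,1]^m. In particular, with η = α/2, φ(γ̂) − φ(γ̂') ≥ m·α²/4. -/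
/-!
Clamping to `[0,1]` is 1-Lipschitz and fixes `g⋆(x)`, so it can only shrink each squared error.
Before clamping, expanding the square of the step `η b w` lowers the error by `2ηb·w(g⋆ − γ̂)`
up to `η²(b w)² ≤ η²` per coordinate; averaging over `μ` and applying the violation bound
gives the decrease.
-/

open Finset

lemma sq_min_max_sub_le {a b c : ℝ} (v : ℝ) (hc : c ∈ Set.Icc a b) :
    (min (max v a) b - c) ^ 2 ≤ (v - c) ^ 2 := by
  have hc_fixed : min (max c a) b = c := by rw [max_eq_left hc.1, min_eq_left hc.2]
  rw [sq_le_sq]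
  calc |min (max v a) b - c| = |min (max v a) b - min (max c a) b| := by rw [hc_fixed]
    _ ≤ |max v a - max c a| := by simpa using abs_min_sub_min_le_max (max v a) b (max c a) b
    _ ≤ |v - c| := abs_max_sub_max_le_abs v c a

lemma sq_add_mul_sub_le {u c d : ℝ} (η : ℝ) (hd : d ^ 2 ≤ 1) :
    (u + η * d - c) ^ 2 ≤ (u - c) ^ 2 - 2 * η * (d * (c - u)) + η ^ 2 := by
  nlinarith [mul_le_mul_of_nonneg_left hd (sq_nonneg η)]

lemma weighted_sum_le_of_le {X ι : Type*} [Fintype X] [Fintype ι] {μ : X → ℝ}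
    (hμ0 : ∀ x, 0 ≤ μ x) (hμ1 : ∑ x, μ x = 1) {F G H : X → ι → ℝ} (t s : ℝ)
    (h : ∀ x i, F x i ≤ G x i - t * H x i + s) :
    ∑ x, μ x * ∑ i, F x i ≤
      ∑ x, μ x * ∑ i, G x i - t * ∑ x, μ x * ∑ i, H x i + s * Fintype.card ι :=
  calc ∑ x, μ x * ∑ i, F x i ≤ ∑ x, μ x * ∑ i, (G x i - t * H x i + s) :=
        sum_le_sum fun x _ => mul_le_mul_of_nonneg_left (sum_le_sum fun i _ => h x i) (hμ0 x)
    _ = _ := by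
        simp only [sum_add_distrib, sum_sub_distrib, ← mul_sum, sum_const, card_univ,
          nsmul_eq_mul, mul_add, mul_sub]
        rw [← sum_mul, hμ1, mul_sum univ (fun x => μ x * _) t]
        simp only [mul_left_comm t]
        ring

theorem potential_decrease_step_general
    {X : Type*} [Fintype X] {m : ℕ}
    (μ : X → ℝ) (hμ0 : ∀ x, 0 ≤ μ x) (hμ1 : ∑ x, μ x = 1)
    (gstar γhat : X → Fin m → ℝ)
    (hgstar : ∀ x i, gstar x i ∈ Set.Icc (0:ℝ) 1)
    (w : X → Fin m → ℝ) (hw : ∀ x i, w x i = 0 ∨ w x i = 1)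
    (b : ℝ) (hb : b = -1 ∨ b = 1)
    (η α : ℝ) (hη : 0 < η)
    (hviol : b * ∑ x, μ x * ∑ i, w x i * (gstar x i - γhat x i) ≥ (α / 2) * m)
    (γhat' : X → Fin m → ℝ)
    (hproj : ∀ x i, γhat' x i = min (max (γhat x i + η * b * w x i) 0) 1)
    (φ : (X → Fin m → ℝ) → ℝ)
    (hφ : ∀ f, φ f = ∑ x, μ x * ∑ i, (f x i - gstar x i) ^ 2) :
    φ γhat - φ γhat' ≥ α * m * η - η ^ 2 * m ∧
      (η = α / 2 → φ γhat - φ γhat' ≥ m * α ^ 2 / 4) := by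
  have hbw : ∀ x i, (b * w x i) ^ 2 ≤ 1 := fun x i => by
    rcases hb with rfl | rfl <;> rcases hw x i with h | h <;> norm_num [h]
  have hstep : ∀ x i, (γhat' x i - gstar x i) ^ 2 ≤
      (γhat x i - gstar x i) ^ 2 - 2 * η * b * (w x i * (gstar x i - γhat x i)) + η ^ 2 := by
    intro x i
    rw [hproj, mul_assoc η]
    refine (sq_min_max_sub_le _ (hgstar x i)).trans ?_
    linarith [sq_add_mul_sub_le (u := γhat x i) (c := gstar x i) η (hbw x i)]
  have hdecrease := weighted_sum_le_of_le hμ0 hμ1 _ _ hstep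
  rw [Fintype.card_fin] at hdecrease
  have hgain := mul_le_mul_of_nonneg_left hviol (by positivity : (0:ℝ) ≤ 2 * η)
  have hfirst : φ γhat - φ γhat' ≥ α * m * η - η ^ 2 * m := by
    rw [hφ, hφ]
    linarith
  refine ⟨hfirst, ?_⟩
  rintro rfl
  linarith

/-- Potential-decrease step of Theorem 3.2: one projected gradient step along a
violated multicalibration direction decreases the mean-square-error potential by
at least α·m·η − η²·m (and by m·α²/4 when η = α/2). -/
theorem potential_decrease_step
    {X : Type*} [Fintype X] {m : ℕ}
    (μ : X → ℝ) (hμ0 : ∀ x, 0 ≤ μ x) (hμ1 : ∑ x, μ x = 1)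
    (gstar γhat : X → Fin m → ℝ)
    (hgstar : ∀ x i, gstar x i ∈ Set.Icc (0:ℝ) 1)
    (hγhat : ∀ x i, γhat x i ∈ Set.Icc (0:ℝ) 1)
    (w : X → Fin m → ℝ) (hw : ∀ x i, w x i = 0 ∨ w x i = 1)
    (b : ℝ) (hb : b = -1 ∨ b = 1)
    (η α : ℝ) (hη : 0 < η) (hα : 0 < α)
    (hviol : b * ∑ x, μ x * ∑ i, w x i * (gstar x i - γhat x i) ≥ (α / 2) * m)
    (γhat' : X → Fin m → ℝ)
    (hproj : ∀ x i, γhat' x i = min (max (γhat x i + η * b * w x i) 0) 1)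
    (φ : (X → Fin m → ℝ) → ℝ)
    (hφ : ∀ f, φ f = ∑ x, μ x * ∑ i, (f x i - gstar x i) ^ 2) :
    φ γhat - φ γhat' ≥ α * m * η - η ^ 2 * m ∧
      (η = α / 2 → φ γhat - φ γhat' ≥ m * α ^ 2 / 4) :=
  potential_decrease_step_general μ hμ0 hμ1 gstar γhat hgstar w hw b hb η α hη hviol γhat' hproj φ
    hφ
end

section
/- Best-action setting as a special case: let there be k actions with contexts x ∈ X (finite, with pmf μ) and values y : X → [0,1]^k. Let C be a finite set of selection rules c : [0,1]^k → Fin k, and let c⋆(v) = argmax_i v_i. Let γ, γ̂ : X → [0,1]^k satisfy: for each c ∈ C, |E_x[ y_{c(γ(x))}(x) − γ̂_{c(γ(x))}(x) ]| ≤ α·k, and |E_x[ y_{c⋆(γ̂(x))}(x) − γ̂_{c⋆(γ̂(x))}(x) ]| ≤ α·k. Then for every c ∈ C, E_x[ y_{c(γ(x))}(x) ] ≤ 2·α·k + E_x[ y_{c⋆(γ̂(x))}(x) ]. -/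
/-! Multicalibration makes γ̂ an unbiased estimate of the payoff of both the rule `c` applied
to `γ` and the argmax rule applied to `γ̂`, each up to `α·k`. Between the two estimates the
argmax rule can only gain, since it picks the largest coordinate of `γ̂`. -/

section

variable {ι R : Type*} [CommRing R] [LinearOrder R] [IsStrictOrderedRing R]

theorem Finset.sum_mul_le_add_of_abs_sum_mul_sub_le (s : Finset ι) {w f g f' g' : ι → R}
    {ε ε' : R} (hw : ∀ i ∈ s, 0 ≤ w i) (hg : ∀ i ∈ s, g i ≤ g' i)
    (h : |∑ i ∈ s, w i * (f i - g i)| ≤ ε) (h' : |∑ i ∈ s, w i * (f' i - g' i)| ≤ ε') :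
    ∑ i ∈ s, w i * f i ≤ ε + ε' + ∑ i ∈ s, w i * f' i := by
  simp only [mul_sub, Finset.sum_sub_distrib] at h h'
  have hmono : ∑ i ∈ s, w i * g i ≤ ∑ i ∈ s, w i * g' i :=
    Finset.sum_le_sum fun i hi => mul_le_mul_of_nonneg_left (hg i hi) (hw i hi)
  linarith [(abs_le.mp h).2, (abs_le.mp h').1]

end

theorem multicalibration_best_action_general
    {X : Type*} [Fintype X] {k : ℕ}
    (μ : X → ℝ) (hμ0 : ∀ x, 0 ≤ μ x)
    (y : X → Fin k → ℝ)
    (C : Finset ((Fin k → ℝ) → Fin k))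
    (cstar : (Fin k → ℝ) → Fin k)
    (hcstar : ∀ (v : Fin k → ℝ) (i : Fin k), v i ≤ v (cstar v))
    (γ γhat : X → Fin k → ℝ)
    (α : ℝ)
    (ha : ∀ c ∈ C, |∑ x, μ x * (y x (c (γ x)) - γhat x (c (γ x)))| ≤ α * k)
    (hb : |∑ x, μ x * (y x (cstar (γhat x)) - γhat x (cstar (γhat x)))| ≤ α * k) :
    ∀ c ∈ C,
      ∑ x, μ x * y x (c (γ x)) ≤ 2 * α * k + ∑ x, μ x * y x (cstar (γhat x)) := by
  intro c hc
  have := Finset.univ.sum_mul_le_add_of_abs_sum_mul_sub_le (fun x _ => hμ0 x)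
    (fun x _ => hcstar (γhat x) (c (γ x))) (ha c hc) hb
  linarith

/-- Best-action special case of Theorem 3.1: with k actions, multicalibration of γ̂
with respect to the rules in C (on γ) and the argmax rule c⋆ (on γ̂) implies the
argmax on γ̂ is competitive with every rule in C on γ, up to 2·α·k. -/
theorem multicalibration_best_action
    {X : Type*} [Fintype X] {k : ℕ} [NeZero k]
    (μ : X → ℝ) (hμ0 : ∀ x, 0 ≤ μ x) (hμ1 : ∑ x, μ x = 1)
    (y : X → Fin k → ℝ) (hy : ∀ x i, y x i ∈ Set.Icc (0:ℝ) 1)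
    (C : Finset ((Fin k → ℝ) → Fin k))
    (cstar : (Fin k → ℝ) → Fin k)
    (hcstar : ∀ (v : Fin k → ℝ) (i : Fin k), v i ≤ v (cstar v))
    (γ γhat : X → Fin k → ℝ)
    (hγ : ∀ x i, γ x i ∈ Set.Icc (0:ℝ) 1)
    (hγhat : ∀ x i, γhat x i ∈ Set.Icc (0:ℝ) 1)
    (α : ℝ) (hα : 0 ≤ α)
    (ha : ∀ c ∈ C, |∑ x, μ x * (y x (c (γ x)) - γhat x (c (γ x)))| ≤ α * k)
    (hb : |∑ x, μ x * (y x (cstar (γhat x)) - γhat x (cstar (γhat x)))| ≤ α * k) :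
    ∀ c ∈ C,
      ∑ x, μ x * y x (c (γ x)) ≤ 2 * α * k + ∑ x, μ x * y x (cstar (γhat x)) :=
  multicalibration_best_action_general μ hμ0 y C cstar hcstar γ γhat α ha hb
end

section
/- Matroid generalization: let M be a matroid on ground set E (|E| = n elements) with rank r, X a finite context space with pmf μ, y : X → E → [0,1] the element values, C a finite set of rules mapping weight vectors in [0,1]^E to independent sets of M, and c⋆ a rule outputting a maximum-weight independent set (equivalently base, as weights are nonnegative) for its input. Suppose γ̂ satisfies, for all c ∈ C, |E_x[ ∑_{e ∈ c(γ(x))} (y x e − γ̂ x e) ]| ≤ α·r, and also |E_x[ ∑_{e ∈ c⋆(γ̂(x))} (y x e − γ̂ x e) ]| ≤ α·r. Then for all c ∈ C, E_x[ ∑_{e ∈ c(γ(x))} y x e ] ≤ 2·α·r + E_x[ ∑_{e ∈ c⋆(γ̂(x))} y x e ]. In particular, setting α = ε/(2r) gives additive error ε. -/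
/-!
Since `cstar` maximises the weight `γhat x` over all independent sets, every rule `c ∈ C`
collects at most as much predicted value `γhat` as `cstar ∘ γhat`, pointwise in `x` and hence
in expectation. The two calibration bounds convert predicted value into true value `y` on either
side, each at a cost of `α * r`.
-/

open Finset

section SelectionValue

variable {X E : Type*} [Fintype X]

def expectedSelectionValue (μ : X → ℝ) (S : X → Finset E) (w : X → E → ℝ) : ℝ :=
  ∑ x, μ x * ∑ e ∈ S x, w x e

lemma expectedSelectionValue_sub (μ : X → ℝ) (S : X → Finset E) (w v : X → E → ℝ) :
    expectedSelectionValue μ S (w - v) =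
      expectedSelectionValue μ S w - expectedSelectionValue μ S v := by
  simp only [expectedSelectionValue, Pi.sub_apply, sum_sub_distrib, mul_sub]

lemma expectedSelectionValue_mono {μ : X → ℝ} (hμ : ∀ x, 0 ≤ μ x) {S T : X → Finset E}
    {w : X → E → ℝ} (hST : ∀ x, ∑ e ∈ S x, w x e ≤ ∑ e ∈ T x, w x e) :
    expectedSelectionValue μ S w ≤ expectedSelectionValue μ T w :=
  sum_le_sum fun x _ => mul_le_mul_of_nonneg_left (hST x) (hμ x)

lemma expectedSelectionValue_le_of_calibrated {μ : X → ℝ} (hμ : ∀ x, 0 ≤ μ x)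
    {S T : X → Finset E} {y ŷ : X → E → ℝ} (hST : ∀ x, ∑ e ∈ S x, ŷ x e ≤ ∑ e ∈ T x, ŷ x e)
    {a b : ℝ} (hS : expectedSelectionValue μ S (y - ŷ) ≤ a)
    (hT : -b ≤ expectedSelectionValue μ T (y - ŷ)) :
    expectedSelectionValue μ S y ≤ a + b + expectedSelectionValue μ T y := by
  have hpred := expectedSelectionValue_mono hμ hST
  rw [expectedSelectionValue_sub] at hS hT
  linarith

end SelectionValue

theorem multicalibration_matroid_general
    {X E : Type*} [Fintype X]
    (μ : X → ℝ) (hμ0 : ∀ x, 0 ≤ μ x)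
    (y : X → E → ℝ)
    (Indep : Finset E → Prop)
    (r : ℕ)
    (C : Finset ((E → ℝ) → Finset E))
    (hC : ∀ c ∈ C, ∀ w : E → ℝ, Indep (c w))
    (cstar : (E → ℝ) → Finset E)
    (hcstarOpt : ∀ (w : E → ℝ) (S : Finset E), Indep S →
      ∑ e ∈ S, w e ≤ ∑ e ∈ cstar w, w e)
    (γ γhat : X → E → ℝ)
    (α : ℝ)
    (ha : ∀ c ∈ C, |∑ x, μ x * ∑ e ∈ c (γ x), (y x e - γhat x e)| ≤ α * r)
    (hb : |∑ x, μ x * ∑ e ∈ cstar (γhat x), (y x e - γhat x e)| ≤ α * r) :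
    (∀ c ∈ C,
      ∑ x, μ x * ∑ e ∈ c (γ x), y x e ≤
        2 * α * r + ∑ x, μ x * ∑ e ∈ cstar (γhat x), y x e) ∧
    (∀ ε : ℝ, 0 < ε → α = ε / (2 * r) → ∀ c ∈ C,
      ∑ x, μ x * ∑ e ∈ c (γ x), y x e ≤
        ε + ∑ x, μ x * ∑ e ∈ cstar (γhat x), y x e) := by
  have main : ∀ c ∈ C, ∑ x, μ x * ∑ e ∈ c (γ x), y x e ≤
      2 * α * r + ∑ x, μ x * ∑ e ∈ cstar (γhat x), y x e := fun c hc => by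
    have h := expectedSelectionValue_le_of_calibrated (S := fun x => c (γ x))
      (T := fun x => cstar (γhat x)) hμ0 (fun x => hcstarOpt _ _ (hC c hc (γ x)))
      (abs_le.mp (ha c hc)).2 (abs_le.mp hb).1
    unfold expectedSelectionValue at h
    linarith
  refine ⟨main, fun ε hε hαε c hc => (main c hc).trans ?_⟩
  have hαr : 2 * α * r ≤ ε := by
    rcases Nat.eq_zero_or_pos r with hr | hr
    · simp [hr, hε.le]
    · rw [hαε]; field_simp; rfl
  linarith

/-- Matroid (max-weight base) generalization of Theorem 3.1: with independent sets of
rank at most r, multicalibration with parameter α gives additive error 2·α·r, and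
α = ε/(2r) gives additive error ε. -/
theorem multicalibration_matroid
    {X E : Type*} [Fintype X] [Fintype E] [DecidableEq E]
    (μ : X → ℝ) (hμ0 : ∀ x, 0 ≤ μ x) (hμ1 : ∑ x, μ x = 1)
    (y : X → E → ℝ) (hy : ∀ x e, y x e ∈ Set.Icc (0:ℝ) 1)
    (Indep : Finset E → Prop)
    -- matroid axioms
    (hEmpty : Indep ∅)
    (hSubset : ∀ A B : Finset E, Indep A → B ⊆ A → Indep B)
    (hExchange : ∀ A B : Finset E, Indep A → Indep B → B.card < A.card →
      ∃ a ∈ A, a ∉ B ∧ Indep (insert a B))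
    (r : ℕ) (hrank : ∀ S : Finset E, Indep S → S.card ≤ r)
    (C : Finset ((E → ℝ) → Finset E))
    (hC : ∀ c ∈ C, ∀ w : E → ℝ, Indep (c w))
    (cstar : (E → ℝ) → Finset E)
    (hcstarI : ∀ w : E → ℝ, Indep (cstar w))
    (hcstarOpt : ∀ (w : E → ℝ) (S : Finset E), Indep S →
      ∑ e ∈ S, w e ≤ ∑ e ∈ cstar w, w e)
    (γ γhat : X → E → ℝ)
    (hγ : ∀ x e, γ x e ∈ Set.Icc (0:ℝ) 1)
    (hγhat : ∀ x e, γhat x e ∈ Set.Icc (0:ℝ) 1)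
    (α : ℝ) (hα : 0 ≤ α)
    (ha : ∀ c ∈ C, |∑ x, μ x * ∑ e ∈ c (γ x), (y x e - γhat x e)| ≤ α * r)
    (hb : |∑ x, μ x * ∑ e ∈ cstar (γhat x), (y x e - γhat x e)| ≤ α * r) :
    (∀ c ∈ C,
      ∑ x, μ x * ∑ e ∈ c (γ x), y x e ≤
        2 * α * r + ∑ x, μ x * ∑ e ∈ cstar (γhat x), y x e) ∧
    (∀ ε : ℝ, 0 < ε → α = ε / (2 * r) → ∀ c ∈ C,
      ∑ x, μ x * ∑ e ∈ c (γ x), y x e ≤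
        ε + ∑ x, μ x * ∑ e ∈ cstar (γhat x), y x e) :=
  multicalibration_matroid_general μ hμ0 y Indep r C hC cstar hcstarOpt γ γhat α ha hb
end

section
/- Argmax on a calibrated star: suppose k = 2 actions with y : X → [0,1]², and γ̂ : X → [0,1]² satisfies exact multicalibration (α = 0) with respect to the weight family {x ↦ e_{argmax γ̂(x)}} ∪ {x ↦ e_{c(γ(x))} : c ∈ C} for finite C. Then E_x[y_{argmax γ̂(x)}(x)] ≥ max_{c ∈ C} E_x[y_{c(γ(x))}(x)], i.e., the argmax rule on the exactly multicalibrated predictor weakly dominates every rule in C applied to the original predictor γ. -/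
/-! Exact multicalibration with respect to a selection rule `w` says that the expected outcome
of `w` equals its expected predicted value under `γ̂`. Applied to the argmax rule and to each
`c ∘ γ`, it turns the claim into a comparison of predicted values, where the argmax rule wins
pointwise. -/

open Finset

section Selection

variable {X ι R : Type*} [Fintype X]

theorem sum_mul_select_eq_of_calibrated [CommRing R] (μ : X → R) (y p : X → ι → R) (w : X → ι)
    (hcal : ∑ x, μ x * (y x (w x) - p x (w x)) = 0) :
    ∑ x, μ x * y x (w x) = ∑ x, μ x * p x (w x) := by
  simpa only [mul_sub, sum_sub_distrib, sub_eq_zero] using hcal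

theorem sum_mul_select_le_sum_mul_argmax [CommRing R] [PartialOrder R] [IsOrderedRing R]
    (μ : X → R) (hμ : ∀ x, 0 ≤ μ x) (p : X → ι → R) (am : X → ι)
    (ham : ∀ x i, p x i ≤ p x (am x)) (w : X → ι) :
    ∑ x, μ x * p x (w x) ≤ ∑ x, μ x * p x (am x) :=
  sum_le_sum fun x _ => mul_le_mul_of_nonneg_left (ham x (w x)) (hμ x)

end Selection

theorem argmax_exact_multicalibration_general
    {X : Type*} [Fintype X]
    (μ : X → ℝ) (hμ0 : ∀ x, 0 ≤ μ x)
    (y : X → Fin 2 → ℝ)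
    (γ γhat : X → Fin 2 → ℝ)
    (C : Finset ((Fin 2 → ℝ) → Fin 2))
    (am : X → Fin 2)
    (ham : ∀ x i, γhat x i ≤ γhat x (am x))
    (hmc_am : ∑ x, μ x * (y x (am x) - γhat x (am x)) = 0)
    (hmc_C : ∀ c ∈ C, ∑ x, μ x * (y x (c (γ x)) - γhat x (c (γ x))) = 0) :
    ∀ c ∈ C, ∑ x, μ x * y x (c (γ x)) ≤ ∑ x, μ x * y x (am x) := by
  intro c hc
  calc ∑ x, μ x * y x (c (γ x))
      = ∑ x, μ x * γhat x (c (γ x)) :=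
        sum_mul_select_eq_of_calibrated μ y γhat (fun x => c (γ x)) (hmc_C c hc)
    _ ≤ ∑ x, μ x * γhat x (am x) :=
        sum_mul_select_le_sum_mul_argmax μ hμ0 γhat am ham (fun x => c (γ x))
    _ = ∑ x, μ x * y x (am x) := (sum_mul_select_eq_of_calibrated μ y γhat am hmc_am).symm

/-- Argmax on a calibrated star (α = 0, two actions): under exact multicalibration,
the argmax rule on γ̂ weakly dominates every rule in C applied to γ. -/
theorem argmax_exact_multicalibration
    {X : Type*} [Fintype X]
    (μ : X → ℝ) (hμ0 : ∀ x, 0 ≤ μ x) (hμ1 : ∑ x, μ x = 1)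
    (y : X → Fin 2 → ℝ) (hy : ∀ x i, y x i ∈ Set.Icc (0:ℝ) 1)
    (γ γhat : X → Fin 2 → ℝ)
    (hγ : ∀ x i, γ x i ∈ Set.Icc (0:ℝ) 1)
    (hγhat : ∀ x i, γhat x i ∈ Set.Icc (0:ℝ) 1)
    (C : Finset ((Fin 2 → ℝ) → Fin 2))
    (am : X → Fin 2)
    (ham : ∀ x i, γhat x i ≤ γhat x (am x))
    (hmc_am : ∑ x, μ x * (y x (am x) - γhat x (am x)) = 0)
    (hmc_C : ∀ c ∈ C, ∑ x, μ x * (y x (c (γ x)) - γhat x (c (γ x))) = 0) :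
    ∀ c ∈ C, ∑ x, μ x * y x (c (γ x)) ≤ ∑ x, μ x * y x (am x) :=
  argmax_exact_multicalibration_general μ hμ0 y γ γhat C am ham hmc_am hmc_C
end
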